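/- Let Γ be totally ordered, X principally complete, φ strictly contracting with fixed point z, and α an asymptotic approximation to z. Then Σ_α = {d(a_ι, φ(a_ι)) : ι < λ} is coinitial in Λ_φ = {d(x, φ(x)) : x ∈ X, x ≠ z}: for every x ≠ z there exists ι < λ with d(a_ι, a_{ι+1}) ≤ d(x, φ(x)). -/

import Mathlib

/-!
For y ≠ z the contraction moves y strictly closer to z, so by the isosceles property of an
ultrametric d(y, z) = d(y, φ y). Hence if x ≠ z had d(x, φ x) < d(a_ι, φ a_ι) for every ι,
then d(a_ι, x) ≤ max (d(a_ι, z), d(z, x)) ≤ d(a_ι, φ a_ι), so x would lie in every ball of the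
approximation, whose intersection is {z}.
-/

section Ultrametric

variable {X Γ : Type*} [LinearOrder Γ] (d : X → X → Γ)

theorem ultrametric_dist_eq_of_lt
    (hd2 : ∀ x y : X, d x y = d y x)
    (hd3 : ∀ x y z : X, d x z ≤ max (d x y) (d y z))
    {x y w : X} (h : d y w < d x y) : d x w = d x y := by
  refine le_antisymm ((hd3 x y w).trans (max_le le_rfl h.le)) ?_
  have hxy := hd3 x w y
  rw [hd2 w y] at hxy
  rcases le_total (d x w) (d y w) with hle | hle
  · rw [max_eq_right hle] at hxy
    exact absurd h (not_lt.mpr hxy)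
  · rwa [max_eq_left hle] at hxy

variable {d} {φ : X → X} {z : X}

theorem dist_fixedPoint_eq_dist_apply
    (hd2 : ∀ x y : X, d x y = d y x)
    (hd3 : ∀ x y z : X, d x z ≤ max (d x y) (d y z))
    (hφ : ∀ x x' : X, x ≠ x' → d (φ x) (φ x') < d x x')
    (hz : φ z = z) {y : X} (hy : y ≠ z) : d y z = d y (φ y) := by
  have hcloser : d z (φ y) < d y z := by
    simpa only [hz, hd2 z] using hφ y z hy
  exact (ultrametric_dist_eq_of_lt d hd2 hd3 hcloser).symm

theorem dist_le_dist_apply_of_dist_apply_le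
    (hd2 : ∀ x y : X, d x y = d y x)
    (hd3 : ∀ x y z : X, d x z ≤ max (d x y) (d y z))
    (hφ : ∀ x x' : X, x ≠ x' → d (φ x) (φ x') < d x x')
    (hz : φ z = z) {x y : X} (hx : x ≠ z) (hy : y ≠ z) (hxy : d x (φ x) ≤ d y (φ y)) :
    d y x ≤ d y (φ y) := by
  have hyz := dist_fixedPoint_eq_dist_apply hd2 hd3 hφ hz hy
  have hxz := dist_fixedPoint_eq_dist_apply hd2 hd3 hφ hz hx
  calc d y x ≤ max (d y z) (d z x) := hd3 y z x
    _ ≤ d y (φ y) := max_le hyz.le (by rwa [hd2, hxz])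

end Ultrametric

theorem stmt_18_general {X Γ : Type*} [LinearOrder Γ]
    (d : X → X → Γ)
    (hd2 : ∀ x y : X, d x y = d y x)
    (hd3 : ∀ x y z : X, d x z ≤ max (d x y) (d y z))
    (φ : X → X)
    (hφ : ∀ x x' : X, x ≠ x' → d (φ x) (φ x') < d x x')
    (z : X) (hz : φ z = z)
    (lam : Ordinal) (hlam : Order.IsSuccLimit lam) (a : Ordinal → X)
    (hsucc : ∀ ι : Ordinal, ι + 1 < lam → a (ι + 1) = φ (a ι) ∧ φ (a ι) ≠ a ι)
    (happrox : (⋂ ι ∈ Set.Iio lam, {w : X | d (a ι) w ≤ d (a ι) (φ (a ι))}) = {z}) :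
    ∀ x : X, x ≠ z → ∃ ι < lam, d (a ι) (a (ι + 1)) ≤ d x (φ x) := by
  intro x hx
  by_contra! hsmaller
  apply hx
  rw [← Set.mem_singleton_iff, ← happrox]
  simp only [Set.mem_iInter, Set.mem_ofPred_eq, Set.mem_Iio]
  intro ι hι
  obtain ⟨hstep, hmoves⟩ := hsucc ι (hlam.succ_lt hι)
  have haz : a ι ≠ z := fun h => hmoves (by rw [h, hz])
  refine dist_le_dist_apply_of_dist_apply_le hd2 hd3 hφ hz hx haz ?_
  simpa only [hstep] using (hsmaller ι hι).le

/-- For an asymptotic approximation α to z, the set Σ_α = {d(a_ι, φ(a_ι))} is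
coinitial in Λ_φ = {d(x, φ(x)) : x ≠ z}: for every x ≠ z there is ι < λ with
d(a_ι, a_{ι+1}) ≤ d(x, φ(x)). -/
theorem stmt_18 {X Γ : Type*} [LinearOrder Γ] [OrderBot Γ]
    (d : X → X → Γ)
    (hd1 : ∀ x y : X, d x y = ⊥ ↔ x = y)
    (hd2 : ∀ x y : X, d x y = d y x)
    (hd3 : ∀ x y z : X, d x z ≤ max (d x y) (d y z))
    (hns : ∀ γ : Γ, γ ≠ ⊥ → ∃ γ' : Γ, γ' ≠ ⊥ ∧ γ' < γ)
    (hpc : ∀ C : Set (Set X),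
      (∀ B ∈ C, ∃ x y : X, x ≠ y ∧ B = {w : X | d x w ≤ d x y}) →
      IsChain (· ⊆ ·) C → (⋂₀ C).Nonempty)
    (φ : X → X)
    (hφ : ∀ x x' : X, x ≠ x' → d (φ x) (φ x') < d x x')
    (z : X) (hz : φ z = z)
    (lam : Ordinal) (hlam : Order.IsSuccLimit lam) (a : Ordinal → X)
    (hsucc : ∀ ι : Ordinal, ι + 1 < lam → a (ι + 1) = φ (a ι) ∧ φ (a ι) ≠ a ι)
    (hdec : ∀ ι κ : Ordinal, ι < κ → κ + 1 < lam →
      d (a κ) (a (κ + 1)) < d (a ι) (a (ι + 1)))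
    (hlim : ∀ μ : Ordinal, Order.IsSuccLimit μ → μ < lam →
      ∀ ι : Ordinal, ι < μ → d (a μ) (a ι) ≤ d (a ι) (a (ι + 1)))
    (happrox : (⋂ ι ∈ Set.Iio lam, {w : X | d (a ι) w ≤ d (a ι) (φ (a ι))}) = {z}) :
    ∀ x : X, x ≠ z → ∃ ι < lam, d (a ι) (a (ι + 1)) ≤ d x (φ x) :=
  stmt_18_general d hd2 hd3 φ hφ z hz lam hlam a hsucc happrox
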